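/- Let G and H be finite simple graphs both having at least two vertices, and suppose G has diameter at least 2 (i.e., there exist two vertices at distance at least 2 in G) and H has at least one edge. Then the Δ-convex hull (in the strong product G ⊠ H) of the two vertices (g₁,h₁) and (g₁,h₂), where h₁h₂ is an edge of H and g₁ any vertex of G with G connected, equals all of V(G ⊠ H). -/

import Mathlib

/-!
Every vertex `(g', h)` with `g' ~ g` in `G` is adjacent to both ends of the edge `(g, h)(g, h')`
of an `H`-fibre, so the edge `{g₁} × {h₁, h₂}` spreads along `G` to `V(G) × {h₁, h₂}`.
A full layer `V(G) × {h}` then contains, for every `g`, an edge `(g, h)(g', h)`, both of whose ends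
are adjacent to `(g, h')` for `h' ~ h`; so full layers spread along `H`.
-/

variable {V : Type*}

/-- `S` is Δ-convex: no vertex outside `S` is adjacent to two adjacent vertices of `S`. -/
def DeltaConvex (G : SimpleGraph V) (S : Set V) : Prop :=
  ∀ ⦃w u v : V⦄, u ∈ S → v ∈ S → G.Adj u v → G.Adj w u → G.Adj w v → w ∈ S

/-- The Δ-convex hull of `S`: the smallest Δ-convex set containing `S`. -/
def deltaHull (G : SimpleGraph V) (S : Set V) : Set V :=
  ⋂₀ {T : Set V | S ⊆ T ∧ DeltaConvex G T}

/-- The strong product of two simple graphs. -/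
def strongProd {α β : Type*} (G : SimpleGraph α) (H : SimpleGraph β) :
    SimpleGraph (α × β) where
  Adj x y := (x.1 = y.1 ∧ H.Adj x.2 y.2) ∨ (G.Adj x.1 y.1 ∧ x.2 = y.2) ∨
    (G.Adj x.1 y.1 ∧ H.Adj x.2 y.2)
  symm := by
    constructor
    rintro ⟨a, b⟩ ⟨c, d⟩ (⟨h1, h2⟩ | ⟨h1, h2⟩ | ⟨h1, h2⟩)
    · exact Or.inl ⟨h1.symm, h2.symm⟩
    · exact Or.inr (Or.inl ⟨h1.symm, h2.symm⟩)
    · exact Or.inr (Or.inr ⟨h1.symm, h2.symm⟩)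
  loopless := by
    constructor
    rintro ⟨a, b⟩ (⟨h1, h2⟩ | ⟨h1, h2⟩ | ⟨h1, h2⟩)
    · exact H.loopless.irrefl b h2
    · exact G.loopless.irrefl a h1
    · exact G.loopless.irrefl a h1

lemma subset_deltaHull (G : SimpleGraph V) (S : Set V) : S ⊆ deltaHull G S :=
  fun _ hx _ hT => hT.1 hx

lemma deltaConvex_deltaHull (G : SimpleGraph V) (S : Set V) : DeltaConvex G (deltaHull G S) :=
  fun _ _ _ hu hv huv hwu hwv T hT => hT.2 (hu T hT) (hv T hT) huv hwu hwv

lemma SimpleGraph.Preconnected.forall_of_forall_adj {G : SimpleGraph V} (hG : G.Preconnected)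
    {P : V → Prop} {a : V} (ha : P a) (step : ∀ u v, G.Adj u v → P u → P v) (b : V) : P b := by
  obtain ⟨w⟩ := hG a b
  induction w with
  | nil => exact ha
  | cons huv _ ih => exact ih (step _ _ huv ha)

namespace DeltaConvex

variable {α β : Type*} {G : SimpleGraph α} {H : SimpleGraph β} {S : Set (α × β)}

lemma strongProd_mem_of_adj_left (hS : DeltaConvex (strongProd G H) S) {u v : α} {h h' : β}
    (hu : (u, h) ∈ S) (hu' : (u, h') ∈ S) (hh : H.Adj h h') (huv : G.Adj u v) : (v, h) ∈ S :=
  hS hu hu' (Or.inl ⟨rfl, hh⟩) (Or.inr (Or.inl ⟨huv.symm, rfl⟩)) (Or.inr (Or.inr ⟨huv.symm, hh⟩))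

lemma strongProd_mem_of_adj_right (hS : DeltaConvex (strongProd G H) S) {g g' : α} {h h' : β}
    (hg : (g, h) ∈ S) (hg' : (g', h) ∈ S) (hgg' : G.Adj g g') (hh : H.Adj h h') : (g, h') ∈ S :=
  hS hg hg' (Or.inr (Or.inl ⟨hgg', rfl⟩)) (Or.inl ⟨rfl, hh.symm⟩) (Or.inr (Or.inr ⟨hgg', hh.symm⟩))

lemma strongProd_layer_of_edge (hS : DeltaConvex (strongProd G H) S) (hG : G.Preconnected)
    {u : α} {h h' : β} (hh : H.Adj h h') (hu : (u, h) ∈ S) (hu' : (u, h') ∈ S) (g : α) :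
    (g, h) ∈ S ∧ (g, h') ∈ S :=
  hG.forall_of_forall_adj (P := fun g => (g, h) ∈ S ∧ (g, h') ∈ S) ⟨hu, hu'⟩
    (fun _ _ hvw ⟨hv, hv'⟩ =>
      ⟨hS.strongProd_mem_of_adj_left hv hv' hh hvw,
        hS.strongProd_mem_of_adj_left hv' hv hh.symm hvw⟩) g

lemma strongProd_eq_univ_of_layer [Nontrivial α] (hS : DeltaConvex (strongProd G H) S)
    (hG : G.Preconnected) (hH : H.Preconnected) {h : β} (hlayer : ∀ g, (g, h) ∈ S) :
    S = Set.univ := by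
  have hall : ∀ h' g, (g, h') ∈ S :=
    hH.forall_of_forall_adj (P := fun h' => ∀ g, (g, h') ∈ S) hlayer fun _ _ hh' hl g =>
      have ⟨_, hgg'⟩ := hG.exists_adj_of_nontrivial g
      hS.strongProd_mem_of_adj_right (hl g) (hl _) hgg' hh'
  exact Set.eq_univ_of_forall fun x => hall x.2 x.1

lemma strongProd_eq_univ_of_edge [Nontrivial α] (hS : DeltaConvex (strongProd G H) S)
    (hG : G.Preconnected) (hH : H.Preconnected) {u : α} {h h' : β} (hh : H.Adj h h')
    (hu : (u, h) ∈ S) (hu' : (u, h') ∈ S) : S = Set.univ :=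
  hS.strongProd_eq_univ_of_layer hG hH fun g => (hS.strongProd_layer_of_edge hG hh hu hu' g).1

end DeltaConvex

theorem stmt_19_general {α β : Type*} [Fintype α]
    (G : SimpleGraph α) (H : SimpleGraph β)
    (hGcard : 2 ≤ Fintype.card α)
    (hGconn : G.Connected) (hHconn : H.Connected)
    (g₁ : α) (h₁ h₂ : β) (hh : H.Adj h₁ h₂) :
    deltaHull (strongProd G H) {(g₁, h₁), (g₁, h₂)} = Set.univ := by
  have : Nontrivial α := Fintype.one_lt_card_iff_nontrivial.mp hGcard
  have hsub := subset_deltaHull (strongProd G H) {(g₁, h₁), (g₁, h₂)}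
  exact (deltaConvex_deltaHull _ _).strongProd_eq_univ_of_edge hGconn.preconnected
    hHconn.preconnected hh (hsub (Set.mem_insert _ _)) (hsub (Set.mem_insert_of_mem _ rfl))

theorem stmt_19 {α β : Type*} [Fintype α] [Fintype β]
    (G : SimpleGraph α) (H : SimpleGraph β)
    (hGcard : 2 ≤ Fintype.card α) (hHcard : 2 ≤ Fintype.card β)
    (hGconn : G.Connected) (hHconn : H.Connected)
    (hdiam : ∃ x y : α, 2 ≤ G.dist x y)
    (g₁ : α) (h₁ h₂ : β) (hh : H.Adj h₁ h₂) :
    deltaHull (strongProd G H) {(g₁, h₁), (g₁, h₂)} = Set.univ :=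
  stmt_19_general G H hGcard hGconn hHconn g₁ h₁ h₂ hh
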